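/- arXiv:2007.14773 — 2 statements merged into one kernel-verified Lean document; each statement's English description precedes it below -/
import Mathlib

section
/- An orientation-preserving homeomorphism of the circle has rational rotation number p/q (in lowest terms) if and only if it has a periodic point, and in that case every periodic point has minimal period q. -/
open Filter Topology

/-- If a monotone map `G` commuting with integer translations satisfies `G x < x + c`,
then `G^[t] x < x + t * c` for positive `t`. -/
private lemma iterate_lt_of_lt (g : CircleDeg1Lift) (x : ℝ) (c : ℤ)
    (h : g x < x + c) : ∀ t : ℕ, 0 < t → g^[t] x < x + t * c := by
  intro t ht
  induction t with
  | zero => exact absurd ht (lt_irrefl 0)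
  | succ t ih =>
    rcases Nat.eq_zero_or_pos t with h0 | h0
    · subst h0; simpa using h
    · have h1 := ih h0
      have h2 : g (g^[t] x) ≤ g (x + t * c) := g.mono h1.le
      have h3 : g (x + (t * c : ℤ)) = g x + (t * c : ℤ) := g.map_add_int x (t * c)
      push_cast at h3
      calc g^[t+1] x = g (g^[t] x) := Function.iterate_succ_apply' g t x
        _ ≤ g x + t * c := by rw [← h3]; exact_mod_cast h2
        _ < x + c + t * c := by linarith
        _ = x + (t + 1 : ℕ) * c := by push_cast; ring

private lemma iterate_gt_of_gt (g : CircleDeg1Lift) (x : ℝ) (c : ℤ)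
    (h : x + c < g x) : ∀ t : ℕ, 0 < t → x + t * c < g^[t] x := by
  intro t ht
  induction t with
  | zero => exact absurd ht (lt_irrefl 0)
  | succ t ih =>
    rcases Nat.eq_zero_or_pos t with h0 | h0
    · subst h0; simpa using h
    · have h1 := ih h0
      have h2 : g (x + t * c) ≤ g (g^[t] x) := g.mono h1.le
      have h3 : g (x + (t * c : ℤ)) = g x + (t * c : ℤ) := g.map_add_int x (t * c)
      push_cast at h3
      calc x + (t + 1 : ℕ) * c = x + c + t * c := by push_cast; ring
        _ < g x + t * c := by linarith
        _ ≤ g (g^[t] x) := by rw [← h3]; exact_mod_cast h2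
        _ = g^[t+1] x := (Function.iterate_succ_apply' g t x).symm

/-- An orientation-preserving circle homeomorphism (given via a lift `F`) has rational
rotation number `p/q` (in lowest terms) if and only if it has a periodic point
(`F^[n] x = x + m` for some integer `m` and `n > 0`), and in the rational case every
periodic point has minimal period `q`. -/
theorem stmt_3 (F : ℝ → ℝ)
    (hFc : Continuous F) (hFm : StrictMono F) (hFb : Function.Bijective F)
    (hFp : ∀ x, F (x + 1) = F x + 1) (τ : ℝ)
    (hτ : ∀ x : ℝ, Tendsto (fun n : ℕ => (F^[n] x - x) / n) atTop (𝓝 τ)) :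
    ((∃ (p : ℤ) (q : ℕ), 0 < q ∧ Nat.Coprime p.natAbs q ∧ τ = (p : ℝ) / q) ↔
        (∃ (x : ℝ) (n : ℕ), 0 < n ∧ ∃ m : ℤ, F^[n] x = x + m)) ∧
      (∀ (p : ℤ) (q : ℕ), 0 < q → Nat.Coprime p.natAbs q → τ = (p : ℝ) / q →
        ∀ x : ℝ, (∃ n : ℕ, 0 < n ∧ ∃ m : ℤ, F^[n] x = x + m) →
          ((∃ m : ℤ, F^[q] x = x + m) ∧
            ∀ k : ℕ, 0 < k → (∃ m : ℤ, F^[k] x = x + m) → q ≤ k)) := by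
  set f : CircleDeg1Lift := ⟨⟨F, hFm.monotone⟩, hFp⟩ with hfdef
  have hcoe : ⇑f = F := rfl
  have hcont : Continuous ⇑f := by rw [hcoe]; exact hFc
  have hiter : ∀ (n : ℕ) (x : ℝ), (f ^ n) x = F^[n] x := by
    intro n x
    rw [CircleDeg1Lift.coe_pow, hcoe]
  have hτ0 : f.translationNumber = τ := by
    apply f.translationNumber_eq_of_tendsto₀
    simpa [hcoe] using hτ 0
  -- key pointwise fact: periodic point of period k jump m forces k * τ = m
  have key : ∀ (k : ℕ) (m : ℤ) (x : ℝ), 0 < k → F^[k] x = x + m → (k : ℝ) * τ = m := by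
    intro k m x hk hx
    have : f.translationNumber = (m : ℝ) / k :=
      (f.translationNumber_eq_rat_iff hcont hk).2 ⟨x, by rw [hiter]; exact hx⟩
    rw [hτ0] at this
    field_simp at this
    linarith
  constructor
  · constructor
    · rintro ⟨p, q, hq, _, hτpq⟩
      have : f.translationNumber = (p : ℝ) / q := by rw [hτ0, hτpq]
      obtain ⟨x, hx⟩ := (f.translationNumber_eq_rat_iff hcont hq).1 this
      exact ⟨x, q, hq, p, by rw [← hiter]; exact hx⟩
    · rintro ⟨x, n, hn, m, hx⟩
      have h1 : (n : ℝ) * τ = m := key n m x hn hx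
      set r : ℚ := (m : ℚ) / n with hr
      refine ⟨r.num, r.den, r.pos, r.reduced, ?_⟩
      have hτr : τ = (m : ℝ) / n := by
        field_simp
        linarith
      have hrc : (r : ℝ) = (m : ℝ) / n := by rw [hr]; push_cast; ring
      rw [hτr, ← hrc, Rat.cast_def]
  · rintro p q hq hcop hτpq x ⟨n, hn, m, hx⟩
    -- For any period k, q ∣ k
    have hdvd : ∀ (k : ℕ) (m' : ℤ), 0 < k → F^[k] x = x + m' → (q : ℤ) ∣ (k : ℤ) ∧ (k : ℤ) * p = m' * q := by
      intro k m' hk hxk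
      have h1 : (k : ℝ) * τ = m' := key k m' x hk hxk
      rw [hτpq] at h1
      have hq0 : (q : ℝ) ≠ 0 := Nat.cast_ne_zero.2 hq.ne'
      have h2 : (k : ℝ) * p = m' * q := by field_simp at h1; linarith
      have h3 : (k : ℤ) * p = m' * q := by exact_mod_cast h2
      have h4 : (q : ℤ) ∣ (k : ℤ) * p := ⟨m', by linarith⟩
      have h5 : IsCoprime (q : ℤ) p := by
        rw [Int.isCoprime_iff_gcd_eq_one, Int.gcd]
        simpa [Nat.coprime_comm, Nat.Coprime] using hcop
      exact ⟨h5.dvd_of_dvd_mul_right h4, h3⟩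
    obtain ⟨⟨t, htq⟩, hnp⟩ := hdvd n m hn hx
    have ht0 : 0 < t := by
      by_contra h
      push_neg at h
      nlinarith [Int.natCast_pos.2 hn, Int.natCast_pos.2 hq]
    refine ⟨⟨p, ?_⟩, ?_⟩
    · -- show F^[q] x = x + p by trichotomy, using g := f ^ q
      set g : CircleDeg1Lift := f ^ q with hg
      have hgF : ∀ y, g y = F^[q] y := fun y => hiter q y
      have hgt : g^[t.toNat] x = x + t.toNat * p := by
        have htn : (t.toNat : ℤ) = t := Int.toNat_of_nonneg (le_of_lt ht0)
        have hqt : q * t.toNat = n := by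
          have : (q : ℤ) * t.toNat = n := by rw [htn]; omega
          exact_mod_cast this
        have : g^[t.toNat] x = F^[n] x := by
          rw [hg, CircleDeg1Lift.coe_pow, hcoe, ← Function.iterate_mul, hqt]
        rw [this, hx]
        have hm : m = t * p := by
          have hq0 : (q : ℤ) ≠ 0 := Int.natCast_ne_zero.2 hq.ne'
          have : (q * t) * p = m * q := by rw [← htq]; exact hnp
          have := mul_right_cancel₀ hq0 (show t * p * q = m * q by linarith)
          linarith
        have hm2 : m = (t.toNat : ℤ) * p := by rw [htn]; exact hm
        rw [hm2]
        push_cast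
        ring
      have ht0' : 0 < t.toNat := by omega
      rcases lt_trichotomy (g x) (x + p) with hlt | heq | hgt'
      · have := iterate_lt_of_lt g x p hlt t.toNat ht0'
        rw [hgt] at this
        simp at this
      · rw [← hgF]; exact heq
      · have := iterate_gt_of_gt g x p hgt' t.toNat ht0'
        rw [hgt] at this
        simp at this
    · intro k hk ⟨m', hm'⟩
      obtain ⟨⟨s, hs⟩, _⟩ := hdvd k m' hk hm'
      have : (q : ℤ) ≤ k := by
        have hs0 : 0 < s := by
          by_contra h
          push_neg at h
          nlinarith [Int.natCast_pos.2 hk, Int.natCast_pos.2 hq]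
        nlinarith [Int.natCast_pos.2 hq]
      exact_mod_cast this
end

section
/- If an orientation-preserving circle homeomorphism f has irrational rotation number, then the ω-limit set ω(x) is the same set for every point x of the circle, and this set is either the whole circle or a perfect, nowhere dense subset of the circle. -/
/-! An irrational rotation number excludes periodic points: `Fⁿ x = x + m` would force
`τ = m / n`. For a lift `G` of an iterate `fᵐ` the orbit of `q` is then monotone and, having no
fixed point to converge to, unbounded; so finitely many `G`-images of the interval between `q`
and `G q` cover a whole period. Choosing `fⁿ¹ x` and `fⁿ² x` close to `p ∈ ω(x)` and
`m = n₂ - n₁`, finitely many forward images of any neighbourhood of `p` cover the circle, and by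
injectivity `p` lies in every `ω(y)`. The common `ω` is closed and invariant: with interior the
same covering makes it the circle; otherwise it is nowhere dense, and perfect because each of its
points recurs without being periodic. -/

open Filter Topology Set Function

section RealLine

variable {G : ℝ → ℝ}

theorem exists_le_abs_iterate_sub (hGc : Continuous G) (hGm : Monotone G)
    (hfix : ∀ t, G t ≠ t) (q b : ℝ) : ∃ K, b ≤ |G^[K] q - q| := by
  by_contra! hb
  have hle : ∀ n, G^[n] q ≤ q + b := fun n => by linarith [(abs_lt.1 (hb n)).2]
  have hge : ∀ n, q - b ≤ G^[n] q := fun n => by linarith [(abs_lt.1 (hb n)).1]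
  obtain ⟨L, hL⟩ : ∃ L, Tendsto (fun n => G^[n] q) atTop (𝓝 L) := by
    rcases le_total q (G q) with h | h
    · exact ⟨_, tendsto_atTop_ciSup (hGm.monotone_iterate_of_le_map h)
        ⟨q + b, forall_mem_range.2 hle⟩⟩
    · exact ⟨_, tendsto_atTop_ciInf (hGm.antitone_iterate_of_map_le h)
        ⟨q - b, forall_mem_range.2 hge⟩⟩
  exact hfix L (isFixedPt_of_tendsto_iterate hL hGc.continuousAt)

theorem exists_iterate_eq_of_mem_uIcc (hGc : Continuous G) (q : ℝ) (K : ℕ) :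
    ∀ t ∈ uIcc q (G^[K] q), ∃ k ≤ K, ∃ s ∈ uIcc q (G q), G^[k] s = t := by
  induction K with
  | zero =>
    intro t ht
    rw [iterate_zero_apply, uIcc_self, mem_singleton_iff] at ht
    exact ⟨0, le_rfl, q, left_mem_uIcc, ht.symm⟩
  | succ K ih =>
    intro t ht
    rcases uIcc_subset_uIcc_union_uIcc (b := G^[K] q) ht with ht | ht
    · obtain ⟨k, hk, s, hs, rfl⟩ := ih t ht
      exact ⟨k, hk.trans K.le_succ, s, hs, rfl⟩
    · rw [iterate_succ_apply] at ht
      obtain ⟨s, hs, rfl⟩ := intermediate_value_uIcc (hGc.iterate K).continuousOn ht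
      exact ⟨K, K.le_succ, s, hs, rfl⟩

end RealLine

section Circle

theorem UnitAddCircle.exists_coe_eq_of_one_le_abs_sub {a b : ℝ} (h : 1 ≤ |b - a|)
    (z : UnitAddCircle) : ∃ t ∈ uIcc a b, (t : UnitAddCircle) = z := by
  obtain ⟨⟨t, hta, htb⟩, rfl⟩ := (AddCircle.equivIco 1 (min a b)).symm.surjective z
  refine ⟨t, ⟨hta, ?_⟩, ?_⟩
  · linarith [max_sub_min_eq_abs a b]
  · simp [AddCircle.equivIco, QuotientAddGroup.equivIcoMod]

variable {f : UnitAddCircle → UnitAddCircle}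

theorem iterate_ne_self_of_irrational {F : CircleDeg1Lift}
    (hF : Semiconj ((↑) : ℝ → UnitAddCircle) F f) (hτ : Irrational F.translationNumber)
    {n : ℕ} (hn : 0 < n) (z : UnitAddCircle) : f^[n] z ≠ z := by
  obtain ⟨x, rfl⟩ := QuotientAddGroup.mk_surjective z
  intro h
  rw [← (hF.iterate_right n) x, ← sub_eq_zero, ← AddCircle.coe_sub,
    AddCircle.coe_eq_zero_iff] at h
  obtain ⟨m, hm⟩ := h
  have hτm := F.translationNumber_of_map_pow_eq_add_int (x := x) (m := m)
    (by rw [zsmul_one] at hm; rw [CircleDeg1Lift.coe_pow]; linarith) hn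
  exact hτ ⟨m / n, by rw [hτm]; push_cast; rfl⟩

theorem exists_iterate_image_cover_of_lift {G : ℝ → ℝ} (hGc : Continuous G) (hGm : Monotone G)
    (hG : Semiconj ((↑) : ℝ → UnitAddCircle) G f) (hfix : ∀ z, f z ≠ z) (q : ℝ) :
    ∃ K, ∀ z, ∃ k ≤ K, ∃ s ∈ uIcc q (G q), f^[k] s = z := by
  obtain ⟨K, hK⟩ := exists_le_abs_iterate_sub hGc hGm (fun t h => hfix t (by rw [← hG, h])) q 1
  refine ⟨K, fun z => ?_⟩
  obtain ⟨t, ht, rfl⟩ := UnitAddCircle.exists_coe_eq_of_one_le_abs_sub hK z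
  obtain ⟨k, hk, s, hs, rfl⟩ := exists_iterate_eq_of_mem_uIcc hGc q K t ht
  exact ⟨k, hk, s, hs, (hG.iterate_right k s).symm⟩

theorem exists_iterate_image_cover {F : ℝ → ℝ} (hFc : Continuous F) (hFm : Monotone F)
    (hF : Semiconj ((↑) : ℝ → UnitAddCircle) F f) (hfix : ∀ z, f z ≠ z) (z₀ : UnitAddCircle) :
    ∃ K, ∀ z, ∃ k ≤ K, ∃ w, dist w z₀ ≤ dist (f z₀) z₀ ∧ f^[k] w = z := by
  obtain ⟨q, rfl⟩ := QuotientAddGroup.mk_surjective z₀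
  -- an integer shift of `F` is still a lift of `f`, and this one makes `|G q - q|` the circle
  -- distance from `q` to `f q`
  set G : ℝ → ℝ := fun t => F t - round (F q - q) with hG
  have hGf : Semiconj ((↑) : ℝ → UnitAddCircle) G f := fun t => by simp [G, hF t]
  obtain ⟨K, hK⟩ := exists_iterate_image_cover_of_lift (hFc.sub continuous_const)
    (fun a b h => sub_le_sub_right (hFm h) _) hGf hfix q
  refine ⟨K, fun z => ?_⟩
  obtain ⟨k, hk, s, hs, rfl⟩ := hK z
  refine ⟨k, hk, s, ?_, rfl⟩
  calc dist (s : UnitAddCircle) q ≤ |s - q| := by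
        rw [dist_eq_norm, ← AddCircle.coe_sub]
        exact QuotientAddGroup.norm_mk_le_norm.trans_eq (Real.norm_eq_abs _)
    _ ≤ |G q - q| := abs_sub_left_of_mem_uIcc hs
    _ = dist (f q) q := by
        rw [← hF q, dist_eq_norm, ← AddCircle.coe_sub, UnitAddCircle.norm_eq, hG]
        ring_nf

theorem exists_iterate_image_cover_of_mapClusterPt {F : ℝ → ℝ} (hFc : Continuous F)
    (hFm : Monotone F) (hF : Semiconj ((↑) : ℝ → UnitAddCircle) F f)
    (hper : ∀ n, 0 < n → ∀ z, f^[n] z ≠ z) {x p : UnitAddCircle}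
    (hp : MapClusterPt p atTop (fun n => f^[n] x)) {U : Set UnitAddCircle} (hU : U ∈ 𝓝 p) :
    ∃ K, ∀ z, ∃ j ≤ K, ∃ w ∈ U, f^[j] w = z := by
  obtain ⟨ε, hε, hball⟩ := Metric.mem_nhds_iff.1 hU
  have hfreq := frequently_atTop.1 <|
    mapClusterPt_iff_frequently.1 hp _ (Metric.ball_mem_nhds p (div_pos hε three_pos))
  obtain ⟨n₁, -, h₁⟩ := hfreq 0
  obtain ⟨n₂, hn, h₂⟩ := hfreq (n₁ + 1)
  have hreturn : f^[n₂ - n₁] (f^[n₁] x) = f^[n₂] x := by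
    rw [← iterate_add_apply, Nat.sub_add_cancel (by omega)]
  obtain ⟨K, hK⟩ := exists_iterate_image_cover (hFc.iterate (n₂ - n₁)) (hFm.iterate _)
    (hF.iterate_right _) (hper _ (by omega)) (f^[n₁] x)
  refine ⟨(n₂ - n₁) * K, fun z => ?_⟩
  obtain ⟨k, hk, w, hw, rfl⟩ := hK z
  refine ⟨(n₂ - n₁) * k, Nat.mul_le_mul_left _ hk, w, hball ?_, by rw [iterate_mul]⟩
  rw [hreturn] at hw
  rw [Metric.mem_ball] at h₁ h₂ ⊢
  linarith [dist_triangle w (f^[n₁] x) p, dist_triangle (f^[n₂] x) p (f^[n₁] x),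
    dist_comm (f^[n₁] x) p]

end Circle

section Recurrence

variable {X : Type*} [TopologicalSpace X] {f : X → X}

theorem mapClusterPt_iterate_of_forall_exists_iterate_eq (hf : Injective f) {p : X}
    (hp : ∀ U ∈ 𝓝 p, ∃ K, ∀ z, ∃ j ≤ K, ∃ w ∈ U, f^[j] w = z) (y : X) :
    MapClusterPt p atTop (fun n => f^[n] y) := by
  refine mapClusterPt_iff_frequently.2 fun U hU => frequently_atTop.2 fun N => ?_
  obtain ⟨K, hK⟩ := hp U hU
  obtain ⟨j, hj, w, hw, hjw⟩ := hK (f^[N + K] y)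
  refine ⟨N + K - j, by omega, ?_⟩
  have : f^[j] (f^[N + K - j] y) = f^[j] w := by
    rw [← iterate_add_apply, Nat.add_sub_cancel' (by omega), hjw]
  rwa [(hf.iterate j) this]

theorem MapClusterPt.apply_iterate (hf : Continuous f) {x p : X}
    (h : MapClusterPt p atTop (fun n => f^[n] x)) :
    MapClusterPt (f p) atTop (fun n => f^[n] (f x)) := by
  simpa only [comp_def, ← iterate_succ_apply' f, iterate_succ_apply] using
    h.continuousAt_comp hf.continuousAt

theorem accPt_of_mapClusterPt_iterate_self {p : X} (hper : ∀ n, 0 < n → f^[n] p ≠ p)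
    (hp : MapClusterPt p atTop (fun n => f^[n] p)) {S : Set X} (hS : ∀ n, f^[n] p ∈ S) :
    AccPt p (𝓟 S) := by
  refine accPt_iff_nhds.2 fun U hU => ?_
  obtain ⟨n, hn, hnU⟩ := frequently_atTop.1 (mapClusterPt_iff_frequently.1 hp U hU) 1
  exact ⟨_, ⟨hnU, hS n⟩, hper n hn⟩

end Recurrence

/-- If an orientation-preserving circle homeomorphism `f` (with lift `F`) has irrational
rotation number, then the ω-limit set `ω(x)` (cluster points of the forward orbit) is the
same set for every point `x`, and this set is either the whole circle or a perfect,
nowhere dense subset of the circle. -/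
theorem stmt_5 (f : AddCircle (1 : ℝ) ≃ₜ AddCircle (1 : ℝ)) (F : ℝ → ℝ)
    (hFc : Continuous F) (hFm : StrictMono F) (hFp : ∀ x, F (x + 1) = F x + 1)
    (hlift : ∀ x : ℝ, f (x : AddCircle (1 : ℝ)) = ((F x : ℝ) : AddCircle (1 : ℝ)))
    (τ : ℝ) (hτ : ∀ x : ℝ, Tendsto (fun n : ℕ => (F^[n] x - x) / n) atTop (𝓝 τ))
    (hirr : Irrational τ)
    (ω : AddCircle (1 : ℝ) → Set (AddCircle (1 : ℝ)))
    (hω : ∀ x, ω x = {y | MapClusterPt y atTop (fun n : ℕ => (⇑f)^[n] x)}) :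
    (∀ x y, ω x = ω y) ∧
      ∀ x, ω x = Set.univ ∨ (Perfect (ω x) ∧ IsNowhereDense (ω x)) := by
  have hmem x p : p ∈ ω x ↔ MapClusterPt p atTop (fun n => f^[n] x) := by rw [hω]; rfl
  let F' : CircleDeg1Lift := ⟨⟨F, hFm.monotone⟩, hFp⟩
  have hF : Semiconj ((↑) : ℝ → AddCircle (1 : ℝ)) F f := fun x => (hlift x).symm
  have hτF : F'.translationNumber = τ := tendsto_nhds_unique (F'.tendsto_translationNumber 0)
    (by simpa [F', CircleDeg1Lift.coe_pow] using hτ 0)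
  have hper : ∀ n, 0 < n → ∀ z, f^[n] z ≠ z := fun n hn =>
    iterate_ne_self_of_irrational (F := F') hF (hτF ▸ hirr) hn
  have hcover x p (hp : p ∈ ω x) U (hU : U ∈ 𝓝 p) :=
    exists_iterate_image_cover_of_mapClusterPt hFc hFm.monotone hF hper ((hmem x p).1 hp) hU
  have hsub x y : ω x ⊆ ω y := fun p hp => (hmem y p).2 <|
    mapClusterPt_iterate_of_forall_exists_iterate_eq f.injective (hcover x p hp) y
  have hsame x y : ω x = ω y := (hsub x y).antisymm (hsub y x)
  refine ⟨hsame, fun x => ?_⟩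
  have hclosed : IsClosed (ω x) := hω x ▸ isClosed_setOfPred_clusterPt
  have hmaps : MapsTo f (ω x) (ω x) := fun p hp => hsame (f x) x ▸
    (hmem (f x) (f p)).2 (((hmem x p).1 hp).apply_iterate f.continuous)
  rcases (interior (ω x)).eq_empty_or_nonempty with hint | ⟨p, hp⟩
  · refine .inr ⟨⟨hclosed, fun z hz => ?_⟩, hclosed.isNowhereDense_iff.2 hint⟩
    exact accPt_of_mapClusterPt_iterate_self (hper · · z) ((hmem z z).1 (hsame x z ▸ hz))
      fun n => hmaps.iterate n hz
  · obtain ⟨K, hK⟩ := hcover x p (interior_subset hp) _ (mem_interior_iff_mem_nhds.1 hp)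
    refine .inl (eq_univ_of_forall fun z => ?_)
    obtain ⟨j, -, w, hw, rfl⟩ := hK z
    exact hmaps.iterate j hw
end
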